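/- arXiv:1506.04093 — 4 statements merged into one kernel-verified Lean document; each statement's English description precedes it below -/
import Mathlib

section
/- Let φ be γ-strongly convex and g be λ-strongly convex, and let (x⋆, y⋆) be a saddle point of L(x,y) = g(x) + ⟨x, A y⟩ − φ(y). Suppose ỹ minimizes y ↦ φ(y) − ⟨x̄, A y⟩ + (1/(2σ))‖y − y^t‖₂² for some x̄, y^t and σ > 0. Then (1/(2σ))‖y^t − y⋆‖₂² ≥ (1/(2σ) + γ)‖ỹ − y⋆‖₂² + (1/(2σ))‖ỹ − y^t‖₂² + ⟨x⋆ − x̄, A(ỹ − y⋆)⟩. -/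
open Matrix RealInnerProductSpace

/-!
Both `ytilde` and `ystar` are minimizers of differentiable functions built from `φ`: `ytilde` of
the proximal objective, `ystar` of `y ↦ φ y - ⟪xstar, A y⟫` (the saddle-point inequality in `y`).
Their first-order conditions give `∇φ ytilde = Aᵀ xbar - σ⁻¹ (ytilde - yt)` and
`∇φ ystar = Aᵀ xstar`. Strong convexity makes `∇φ` strongly monotone, and pairing the difference
of the two gradients with `ytilde - ystar` yields the claim after the three-point identity
`‖yt - ystar‖² = ‖ytilde - ystar‖² - 2⟪ytilde - yt, ytilde - ystar⟫ + ‖ytilde - yt‖²`.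
-/

section

variable {E : Type*} [NormedAddCommGroup E] [InnerProductSpace ℝ E]

theorem gradient_eq_of_forall_sub_inner_add_norm_sq_le [CompleteSpace E] {f : E → ℝ}
    {m v p : E} {c : ℝ} (hf : DifferentiableAt ℝ f m)
    (hmin : ∀ y, f m - ⟪v, m⟫ + c * ‖m - p‖ ^ 2 ≤ f y - ⟪v, y⟫ + c * ‖y - p‖ ^ 2) :
    gradient f m = v - (2 * c) • (m - p) := by
  have hderiv := (hf.hasFDerivAt.sub (innerSL ℝ v).hasFDerivAt).add
    (((hasFDerivAt_id m).sub_const p).norm_sq.const_mul c)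
  have hzero := IsLocalMin.hasFDerivAt_eq_zero (Filter.Eventually.of_forall hmin) hderiv
  have horth : ∀ w, ⟪gradient f m - v + (2 * c) • (m - p), w⟫ = 0 := fun w => by
    have hw := congrArg (· w) hzero
    simp only [_root_.add_apply, _root_.sub_apply, _root_.smul_apply,
      ContinuousLinearMap.comp_apply, innerSL_apply_apply, ContinuousLinearMap.id_apply, id,
      _root_.zero_apply, smul_eq_mul, nsmul_eq_mul, Nat.cast_ofNat] at hw
    rw [inner_add_left, inner_sub_left, real_inner_smul_left, inner_gradient_left]
    linarith
  rw [← sub_eq_zero, ← inner_self_eq_zero (𝕜 := ℝ), ← horth (gradient f m - _)]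
  congr 1
  abel

theorem mul_sq_norm_sub_le_inner_gradient_sub [CompleteSpace E] {f : E → ℝ} {γ : ℝ}
    (hf : ∀ y y', f y' ≥ f y + ⟪gradient f y, y' - y⟫ + γ / 2 * ‖y' - y‖ ^ 2) (y y' : E) :
    γ * ‖y - y'‖ ^ 2 ≤ ⟪gradient f y - gradient f y', y - y'⟫ := by
  have h₁ := hf y y'
  have h₂ := hf y' y
  rw [← neg_sub y y', inner_neg_right, norm_neg] at h₁
  rw [inner_sub_left]
  linarith

theorem norm_sub_sq_ge_of_inner_prox_ge {γ c : ℝ} {y yt ys u us : E}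
    (h : γ * ‖y - ys‖ ^ 2 ≤ ⟪u - (2 * c) • (y - yt) - us, y - ys⟫) :
    c * ‖yt - ys‖ ^ 2 ≥ (c + γ) * ‖y - ys‖ ^ 2 + c * ‖y - yt‖ ^ 2 + ⟪us - u, y - ys⟫ := by
  have hsplit : yt - ys = (y - ys) - (y - yt) := by abel
  rw [inner_sub_left, inner_sub_left, real_inner_smul_left] at h
  rw [hsplit, norm_sub_sq_real, real_inner_comm, inner_sub_left us u]
  linarith

end

theorem Matrix.inner_toLp_mulVec {m n : Type*} [Fintype m] [Fintype n] (A : Matrix m n ℝ)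
    (x : EuclideanSpace ℝ m) (y : EuclideanSpace ℝ n) :
    ⟪x, WithLp.toLp 2 (A *ᵥ y)⟫ = ⟪WithLp.toLp 2 (Aᵀ *ᵥ x), y⟫ := by
  simp only [EuclideanSpace.inner_eq_star_dotProduct, star_trivial, dotProduct_transpose_mulVec,
    dotProduct_comm]

theorem dual_update_inequality_general
    (d q : ℕ) (γ : ℝ)
    (φ : EuclideanSpace ℝ (Fin q) → ℝ) (g : EuclideanSpace ℝ (Fin d) → ℝ)
    (hφdiff : Differentiable ℝ φ)
    (hφsc : ∀ y y' : EuclideanSpace ℝ (Fin q),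
      φ y' ≥ φ y + ⟪gradient φ y, y' - y⟫ + γ / 2 * ‖y' - y‖ ^ 2)
    (A : Matrix (Fin d) (Fin q) ℝ)
    (L : EuclideanSpace ℝ (Fin d) → EuclideanSpace ℝ (Fin q) → ℝ)
    (hL : ∀ x y, L x y = g x + ⟪x, (WithLp.toLp 2 (A.mulVec y) : EuclideanSpace ℝ (Fin d))⟫ - φ y)
    (xstar : EuclideanSpace ℝ (Fin d)) (ystar : EuclideanSpace ℝ (Fin q))
    (hsaddle : ∀ (x : EuclideanSpace ℝ (Fin d)) (y : EuclideanSpace ℝ (Fin q)),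
      L xstar y ≤ L xstar ystar ∧ L xstar ystar ≤ L x ystar)
    (xbar : EuclideanSpace ℝ (Fin d)) (yt : EuclideanSpace ℝ (Fin q))
    (σ : ℝ)
    (ytilde : EuclideanSpace ℝ (Fin q))
    (hmin : ∀ y : EuclideanSpace ℝ (Fin q),
      φ ytilde - ⟪xbar, (WithLp.toLp 2 (A.mulVec ytilde) : EuclideanSpace ℝ (Fin d))⟫
          + 1 / (2 * σ) * ‖ytilde - yt‖ ^ 2
        ≤ φ y - ⟪xbar, (WithLp.toLp 2 (A.mulVec y) : EuclideanSpace ℝ (Fin d))⟫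
          + 1 / (2 * σ) * ‖y - yt‖ ^ 2) :
    1 / (2 * σ) * ‖yt - ystar‖ ^ 2
      ≥ (1 / (2 * σ) + γ) * ‖ytilde - ystar‖ ^ 2
        + 1 / (2 * σ) * ‖ytilde - yt‖ ^ 2
        + ⟪xstar - xbar, (WithLp.toLp 2 (A.mulVec (ytilde - ystar)) : EuclideanSpace ℝ (Fin d))⟫ := by
  have hprox :
      gradient φ ytilde = WithLp.toLp 2 (Aᵀ *ᵥ xbar) - (2 * (1 / (2 * σ))) • (ytilde - yt) :=
    gradient_eq_of_forall_sub_inner_add_norm_sq_le (hφdiff ytilde) fun y => by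
      simpa only [Matrix.inner_toLp_mulVec] using hmin y
  have hstar : gradient φ ystar = WithLp.toLp 2 (Aᵀ *ᵥ xstar) := by
    simpa using gradient_eq_of_forall_sub_inner_add_norm_sq_le (c := 0) (p := ystar)
      (hφdiff ystar) fun y => by
        have hy := (hsaddle xstar y).1
        simp only [hL, Matrix.inner_toLp_mulVec] at hy
        linarith
  have hmono := mul_sq_norm_sub_le_inner_gradient_sub hφsc ytilde ystar
  rw [hprox, hstar] at hmono
  -- The coercion in `A.mulVec (ytilde - ystar)` elaborates to `A *ᵥ (ofLp ytilde - ofLp ystar)`,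
  -- which only agrees up to defeq with the `ofLp (ytilde - ystar)` of `inner_toLp_mulVec`.
  have hcoupling :
      ⟪xstar - xbar, (WithLp.toLp 2 (A *ᵥ (ytilde - ystar)) : EuclideanSpace ℝ (Fin d))⟫ =
        ⟪WithLp.toLp 2 (Aᵀ *ᵥ xstar) - WithLp.toLp 2 (Aᵀ *ᵥ xbar), ytilde - ystar⟫ :=
    (Matrix.inner_toLp_mulVec A _ (ytilde - ystar)).trans <| by
      rw [WithLp.ofLp_sub, Matrix.mulVec_sub, WithLp.toLp_sub]
  simpa only [hcoupling] using norm_sub_sq_ge_of_inner_prox_ge hmono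

theorem dual_update_inequality
    (d q : ℕ) (γ lam : ℝ) (hγ : 0 < γ) (hlam : 0 < lam)
    (φ : EuclideanSpace ℝ (Fin q) → ℝ) (g : EuclideanSpace ℝ (Fin d) → ℝ)
    (hφdiff : Differentiable ℝ φ) (hgdiff : Differentiable ℝ g)
    (hφsc : ∀ y y' : EuclideanSpace ℝ (Fin q),
      φ y' ≥ φ y + ⟪gradient φ y, y' - y⟫ + γ / 2 * ‖y' - y‖ ^ 2)
    (hgsc : ∀ x x' : EuclideanSpace ℝ (Fin d),
      g x' ≥ g x + ⟪gradient g x, x' - x⟫ + lam / 2 * ‖x' - x‖ ^ 2)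
    (A : Matrix (Fin d) (Fin q) ℝ)
    (L : EuclideanSpace ℝ (Fin d) → EuclideanSpace ℝ (Fin q) → ℝ)
    (hL : ∀ x y, L x y = g x + ⟪x, (WithLp.toLp 2 (A.mulVec y) : EuclideanSpace ℝ (Fin d))⟫ - φ y)
    (xstar : EuclideanSpace ℝ (Fin d)) (ystar : EuclideanSpace ℝ (Fin q))
    (hsaddle : ∀ (x : EuclideanSpace ℝ (Fin d)) (y : EuclideanSpace ℝ (Fin q)),
      L xstar y ≤ L xstar ystar ∧ L xstar ystar ≤ L x ystar)
    (xbar : EuclideanSpace ℝ (Fin d)) (yt : EuclideanSpace ℝ (Fin q))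
    (σ : ℝ) (hσ : 0 < σ)
    (ytilde : EuclideanSpace ℝ (Fin q))
    (hmin : ∀ y : EuclideanSpace ℝ (Fin q),
      φ ytilde - ⟪xbar, (WithLp.toLp 2 (A.mulVec ytilde) : EuclideanSpace ℝ (Fin d))⟫
          + 1 / (2 * σ) * ‖ytilde - yt‖ ^ 2
        ≤ φ y - ⟪xbar, (WithLp.toLp 2 (A.mulVec y) : EuclideanSpace ℝ (Fin d))⟫
          + 1 / (2 * σ) * ‖y - yt‖ ^ 2) :
    1 / (2 * σ) * ‖yt - ystar‖ ^ 2
      ≥ (1 / (2 * σ) + γ) * ‖ytilde - ystar‖ ^ 2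
        + 1 / (2 * σ) * ‖ytilde - yt‖ ^ 2
        + ⟪xstar - xbar, (WithLp.toLp 2 (A.mulVec (ytilde - ystar)) : EuclideanSpace ℝ (Fin d))⟫ :=
  dual_update_inequality_general d q γ φ g hφdiff hφsc A L hL xstar ystar hsaddle xbar yt σ ytilde
    hmin
end

section
/- Let g: ℝ^d → ℝ be λ-strongly convex, let v ∈ ℝ^d, τ > 0, and x^t ∈ ℝ^d. If x^{t+1} minimizes x ↦ g(x) + ⟨x, v⟩ + (1/(2τ))‖x − x^t‖₂², then for any x⋆ minimizing x ↦ g(x) + ⟨x, u⋆⟩ (where u⋆ ∈ ℝ^d): (1/(2τ))‖x^t − x⋆‖₂² ≥ (1/(2τ) + λ)‖x^{t+1} − x⋆‖₂² + (1/(2τ))‖x^{t+1} − x^t‖₂² + ⟨x^{t+1} − x⋆, v − u⋆⟩. -/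
/-! Both minimality conditions are first-order optimality conditions, which identify the gradients
of `g` at `xnext` and at `xstar`. Adding the strong convexity inequality at the two points in both
orders shows that `∇g` is `lam`-strongly monotone; inserting the two gradients into this
monotonicity inequality and expanding `‖xt - xstar‖² = ‖(xnext - xstar) - (xnext - xt)‖²` gives
the claim. -/

open RealInnerProductSpace InnerProductSpace

section

variable {E : Type*} [NormedAddCommGroup E] [InnerProductSpace ℝ E]

theorem mul_norm_sub_sq_le_inner_sub {g : E → ℝ} {g' : E → E} {lam : ℝ}
    (hg : ∀ x x', g x' ≥ g x + ⟪g' x, x' - x⟫ + lam / 2 * ‖x' - x‖ ^ 2) (x y : E) :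
    lam * ‖x - y‖ ^ 2 ≤ ⟪g' x - g' y, x - y⟫ := by
  have hxy := hg x y
  have hyx := hg y x
  rw [← neg_sub x y, inner_neg_right, norm_neg] at hxy
  rw [inner_sub_left]
  linarith

variable [CompleteSpace E]

theorem HasGradientAt.add {f g : E → ℝ} {f' g' x : E} (hf : HasGradientAt f f' x)
    (hg : HasGradientAt g g' x) : HasGradientAt (fun y => f y + g y) (f' + g') x := by
  rw [hasGradientAt_iff_hasFDerivAt, map_add]
  exact hf.hasFDerivAt.add hg.hasFDerivAt

theorem IsLocalMin.hasGradientAt_eq_zero {f : E → ℝ} {f' x : E} (h : IsLocalMin f x)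
    (hf : HasGradientAt f f' x) : f' = 0 :=
  (toDual ℝ E).map_eq_zero_iff.mp (h.hasFDerivAt_eq_zero hf.hasFDerivAt)

theorem hasGradientAt_inner_const (u x : E) : HasGradientAt (fun y => ⟪y, u⟫) u x := by
  have h : (fun y => ⟪y, u⟫) = toDual ℝ E u := funext fun y => by simp [real_inner_comm]
  rw [hasGradientAt_iff_hasFDerivAt, h]
  exact (toDual ℝ E u).hasFDerivAt

theorem hasGradientAt_mul_norm_sub_sq (c : ℝ) (a x : E) :
    HasGradientAt (fun y => c * ‖y - a‖ ^ 2) ((2 * c) • (x - a)) x := by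
  rw [hasGradientAt_iff_hasFDerivAt]
  refine (((hasFDerivAt_sub_const (x := x) a).norm_sq).const_mul c).congr_fderiv ?_
  ext y
  simp only [map_sub, ContinuousLinearMap.comp_id, smul_apply, sub_apply, coe_innerSL_apply,
    nsmul_eq_mul, Nat.cast_ofNat, smul_eq_mul, map_smul, toDual_apply_apply]
  ring

theorem gradient_eq_neg_of_forall_add_le {g h : E → ℝ} {x q : E} (hg : DifferentiableAt ℝ g x)
    (hh : HasGradientAt h q x) (hmin : ∀ y, g x + h x ≤ g y + h y) : gradient g x = -q := by
  have hmin' : IsLocalMin (fun y => g y + h y) x := Filter.Eventually.of_forall hmin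
  exact eq_neg_of_add_eq_zero_left (hmin'.hasGradientAt_eq_zero (hg.hasGradientAt.add hh))

end

theorem primal_update_inequality_general
    (d : ℕ) (lam : ℝ)
    (g : EuclideanSpace ℝ (Fin d) → ℝ) (hgdiff : Differentiable ℝ g)
    (hgsc : ∀ x x' : EuclideanSpace ℝ (Fin d),
      g x' ≥ g x + ⟪gradient g x, x' - x⟫ + lam / 2 * ‖x' - x‖ ^ 2)
    (v ustar : EuclideanSpace ℝ (Fin d)) (τ : ℝ)
    (xt xnext xstar : EuclideanSpace ℝ (Fin d))
    (hmin : ∀ x : EuclideanSpace ℝ (Fin d),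
      g xnext + ⟪xnext, v⟫ + 1 / (2 * τ) * ‖xnext - xt‖ ^ 2
        ≤ g x + ⟪x, v⟫ + 1 / (2 * τ) * ‖x - xt‖ ^ 2)
    (hstar : ∀ x : EuclideanSpace ℝ (Fin d),
      g xstar + ⟪xstar, ustar⟫ ≤ g x + ⟪x, ustar⟫) :
    1 / (2 * τ) * ‖xt - xstar‖ ^ 2
      ≥ (1 / (2 * τ) + lam) * ‖xnext - xstar‖ ^ 2
        + 1 / (2 * τ) * ‖xnext - xt‖ ^ 2
        + ⟪xnext - xstar, v - ustar⟫ := by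
  set c := 1 / (2 * τ)
  have hgrad_next : gradient g xnext = -(v + (2 * c) • (xnext - xt)) :=
    gradient_eq_neg_of_forall_add_le (hgdiff xnext)
      ((hasGradientAt_inner_const v xnext).add (hasGradientAt_mul_norm_sub_sq c xt xnext))
      fun y => by linarith [hmin y]
  have hgrad_star : gradient g xstar = -ustar :=
    gradient_eq_neg_of_forall_add_le (hgdiff xstar) (hasGradientAt_inner_const ustar xstar) hstar
  have hmono := mul_norm_sub_sq_le_inner_sub hgsc xnext xstar
  rw [hgrad_next, hgrad_star, neg_sub_neg, inner_sub_left, inner_add_left,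
    real_inner_smul_left] at hmono
  have hsplit : ‖xt - xstar‖ ^ 2 = ‖(xnext - xstar) - (xnext - xt)‖ ^ 2 := by
    rw [sub_sub_sub_cancel_left]
  rw [hsplit, norm_sub_sq_real, inner_sub_right (xnext - xstar) v ustar]
  simp only [real_inner_comm (xnext - xstar)] at hmono ⊢
  linear_combination hmono

theorem primal_update_inequality
    (d : ℕ) (lam : ℝ) (hlam : 0 < lam)
    (g : EuclideanSpace ℝ (Fin d) → ℝ) (hgdiff : Differentiable ℝ g)
    (hgsc : ∀ x x' : EuclideanSpace ℝ (Fin d),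
      g x' ≥ g x + ⟪gradient g x, x' - x⟫ + lam / 2 * ‖x' - x‖ ^ 2)
    (v ustar : EuclideanSpace ℝ (Fin d)) (τ : ℝ) (hτ : 0 < τ)
    (xt xnext xstar : EuclideanSpace ℝ (Fin d))
    (hmin : ∀ x : EuclideanSpace ℝ (Fin d),
      g xnext + ⟪xnext, v⟫ + 1 / (2 * τ) * ‖xnext - xt‖ ^ 2
        ≤ g x + ⟪x, v⟫ + 1 / (2 * τ) * ‖x - xt‖ ^ 2)
    (hstar : ∀ x : EuclideanSpace ℝ (Fin d),
      g xstar + ⟪xstar, ustar⟫ ≤ g x + ⟪x, ustar⟫) :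
    1 / (2 * τ) * ‖xt - xstar‖ ^ 2
      ≥ (1 / (2 * τ) + lam) * ‖xnext - xstar‖ ^ 2
        + 1 / (2 * τ) * ‖xnext - xt‖ ^ 2
        + ⟪xnext - xstar, v - ustar⟫ :=
  primal_update_inequality_general d lam g hgdiff hgsc v ustar τ xt xnext xstar hmin hstar
end

section
/- Let n ≥ m ≥ 1 be integers and λ, γ > 0. Define θ = 1 − 1/(n/m + R√((n/m)/(λγ))) for some R > 0, τ = (1/(2R))√((mγ)/(nλ)), and σ = (1/(2R))√((nλ)/(mγ)). Then θ·(1/(2τ) + λ) ≥ 1/(2τ). -/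
/-!
Write `k = n / m ≥ 1` and `b = R √(k / (λγ))`, so that `θ = 1 - 1 / (k + b)`. The step size is
chosen so that `1 / (2τ) = λ b`, and the claim becomes `(1 - 1/(k + b)) (λ b + λ) ≥ λ b`, i.e.
`(b + 1) / (k + b) ≤ 1`, which is `k ≥ 1`.
-/

theorem mul_le_one_sub_one_div_mul {k b lam : ℝ} (hk : 1 ≤ k) (hb : 0 ≤ b) (hlam : 0 ≤ lam) :
    lam * b ≤ (1 - 1 / (k + b)) * (lam * b + lam) := by
  have hkb : 0 < k + b := by linarith
  have hfrac : (b + 1) / (k + b) ≤ 1 := (div_le_one hkb).mpr (by linarith)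
  calc lam * b = lam * (b + 1) - lam * 1 := by ring
    _ ≤ lam * (b + 1) - lam * ((b + 1) / (k + b)) := by gcongr
    _ = (1 - 1 / (k + b)) * (lam * b + lam) := by field_simp

theorem one_div_two_mul_one_div_two_mul (R s : ℝ) :
    1 / (2 * (1 / (2 * R) * s)) = R * s⁻¹ := by
  simp only [one_div, mul_inv]
  ring_nf
  simp

theorem mul_sqrt_div_mul_eq_sqrt_div {lam : ℝ} (hlam : 0 < lam) (x γ : ℝ) :
    lam * √(x / (lam * γ)) = √(x * lam / γ) := by
  rw [← Real.sqrt_sq hlam.le, ← Real.sqrt_mul (sq_nonneg lam), Real.sqrt_sq hlam.le]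
  congr 1
  field_simp

theorem one_le_natCast_div_natCast {m n : ℕ} (hm : 1 ≤ m) (hmn : m ≤ n) : 1 ≤ (n : ℝ) / m :=
  (one_le_div (by exact_mod_cast hm)).mpr (by exact_mod_cast hmn)

theorem theta_tau_contraction_general
    (n m : ℕ) (hm : 1 ≤ m) (hmn : m ≤ n)
    (lam γ R : ℝ) (hlam : 0 < lam) (hR : 0 < R)
    (θ τ : ℝ)
    (hθ : θ = 1 - 1 / ((n : ℝ) / m + R * Real.sqrt (((n : ℝ) / m) / (lam * γ))))
    (hτ : τ = 1 / (2 * R) * Real.sqrt ((m * γ) / (n * lam))) :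
    θ * (1 / (2 * τ) + lam) ≥ 1 / (2 * τ) := by
  set b := R * √(((n : ℝ) / m) / (lam * γ))
  have hstep : 1 / (2 * τ) = lam * b := by
    rw [hτ, one_div_two_mul_one_div_two_mul, ← Real.sqrt_inv, inv_div,
      mul_left_comm, mul_sqrt_div_mul_eq_sqrt_div hlam]
    congr 2
    ring
  rw [hstep, hθ]
  exact mul_le_one_sub_one_div_mul (one_le_natCast_div_natCast hm hmn) (by positivity) hlam.le

theorem theta_tau_contraction
    (n m : ℕ) (hm : 1 ≤ m) (hmn : m ≤ n)
    (lam γ R : ℝ) (hlam : 0 < lam) (hγ : 0 < γ) (hR : 0 < R)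
    (θ τ : ℝ)
    (hθ : θ = 1 - 1 / ((n : ℝ) / m + R * Real.sqrt (((n : ℝ) / m) / (lam * γ))))
    (hτ : τ = 1 / (2 * R) * Real.sqrt ((m * γ) / (n * lam))) :
    θ * (1 / (2 * τ) + lam) ≥ 1 / (2 * τ) :=
  theta_tau_contraction_general n m hm hmn lam γ R hlam hR θ τ hθ hτ
end

section
/- Let n ≥ m ≥ 1 be integers, λ, γ > 0, and R_i, R_max > 0 with R_i ≤ R_max. Define σ_i = (1/(2R_i))√((nλ)/(mγ)), θ = 1 − 1/(n/m + R_max√((n/m)/(λγ))), μ_i = 1/(2mσ_i) + ((n−m)/(mn))γ, and μ_i' = 1/(2mσ_i) + γ/m. Then θ·μ_i' ≥ μ_i. -/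
theorem theta_mu_contraction
    (n m : ℕ) (hm : 1 ≤ m) (hmn : m ≤ n)
    (lam γ Ri Rmax : ℝ) (hlam : 0 < lam) (hγ : 0 < γ)
    (hRi : 0 < Ri) (hRmax : 0 < Rmax) (hle : Ri ≤ Rmax)
    (σi θ μi μi' : ℝ)
    (hσi : σi = 1 / (2 * Ri) * Real.sqrt ((n * lam) / (m * γ)))
    (hθ : θ = 1 - 1 / ((n : ℝ) / m + Rmax * Real.sqrt (((n : ℝ) / m) / (lam * γ))))
    (hμi : μi = 1 / (2 * m * σi) + (((n : ℝ) - m) / (m * n)) * γ)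
    (hμi' : μi' = 1 / (2 * m * σi) + γ / m) :
    θ * μi' ≥ μi := by
  have hM : (0:ℝ) < m := by exact_mod_cast hm
  have hN : (0:ℝ) < n := by exact_mod_cast lt_of_lt_of_le hm hmn
  have hMN : (m:ℝ) ≤ n := by exact_mod_cast hmn
  set sn := Real.sqrt n with hsn
  set sm := Real.sqrt m with hsm
  set sl := Real.sqrt lam with hsl
  set sg := Real.sqrt γ with hsg
  have psn : 0 < sn := Real.sqrt_pos.2 hN
  have psm : 0 < sm := Real.sqrt_pos.2 hM
  have psl : 0 < sl := Real.sqrt_pos.2 hlam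
  have psg : 0 < sg := Real.sqrt_pos.2 hγ
  have hsn2 : sn ^ 2 = n := Real.sq_sqrt hN.le
  have hsm2 : sm ^ 2 = m := Real.sq_sqrt hM.le
  have hsl2 : sl ^ 2 = lam := Real.sq_sqrt hlam.le
  have hsg2 : sg ^ 2 = γ := Real.sq_sqrt hγ.le
  have hs1 : Real.sqrt ((n * lam) / (m * γ)) = (sn * sl) / (sm * sg) := by
    rw [Real.sqrt_div' ((n:ℝ) * lam) (by positivity), Real.sqrt_mul hN.le,
      Real.sqrt_mul hM.le]
  have hs2 : Real.sqrt (((n : ℝ) / m) / (lam * γ)) = (sn / sm) / (sl * sg) := by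
    rw [Real.sqrt_div' ((n:ℝ) / m) (by positivity), Real.sqrt_div hN.le,
      Real.sqrt_mul hlam.le]
  have hσpos : 0 < σi := by rw [hσi, hs1]; positivity
  have ha : 1 / (2 * (m:ℝ) * σi) = Ri * sg / (sm * sn * sl) := by
    rw [hσi, hs1]
    rw [← hsm2]
    field_simp
  set D := (n : ℝ) / m + Rmax * ((sn / sm) / (sl * sg)) with hD
  have hDpos : 0 < D := by positivity
  have key : μi' * (n:ℝ) ≤ γ * D := by
    rw [hμi', ha, hD]
    have h1 : Ri * sg / (sm * sn * sl) * n ≤ γ * (Rmax * ((sn / sm) / (sl * sg))) := by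
      have eL : Ri * sg / (sm * sn * sl) * (n:ℝ) = Ri * sg * sn / (sm * sl) := by
        rw [← hsn2]; field_simp
      have eR : γ * (Rmax * ((sn / sm) / (sl * sg))) = Rmax * sg * sn / (sm * sl) := by
        rw [← hsg2]; field_simp
      rw [eL, eR]
      gcongr
    have h2 : γ / (m:ℝ) * n = γ * ((n:ℝ) / m) := by ring
    nlinarith [h1]
  have hμ'pos : 0 < μi' := by rw [hμi', ha]; positivity
  have hdiv : μi' / D ≤ γ / (n:ℝ) := by
    rw [div_le_div_iff₀ hDpos hN]
    linarith [key]
  have hμeq : μi = μi' - γ / n := by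
    rw [hμi, hμi']
    field_simp
    ring
  rw [hθ, hs2, ← hD, hμeq]
  have heq : (1 - 1 / D) * μi' = μi' - μi' / D := by ring
  rw [heq]
  linarith [hdiv]
end
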